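/- arXiv:2102.01592 — 14 statements merged into one kernel-verified Lean document; each statement's English description precedes it below -/
import Mathlib

section
/- Let X be an abelian group and let f, g : X → ℝ be positive functions satisfying the Kac–Bernstein functional equation f(x+y)·g(x−y) = f(x)·f(y)·g(x)·g(−y) for all x, y ∈ X. Then there exist functions P, l, m, r : X → ℝ such that P is quadratic, l and m are additive, r is constant on cosets of 2X, and f(x) = exp(P(x) + l(x) + r(x)) and g(x) = exp(P(x) + m(x) − r(x)) for all x ∈ X. -/
/-- Kac–Bernstein functional equation on an abelian group: positive solutions. -/
theorem kac_bernstein_positive {X : Type*} [AddCommGroup X] (f g : X → ℝ)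
    (hf : ∀ x, 0 < f x) (hg : ∀ x, 0 < g x)
    (hKB : ∀ x y : X, f (x + y) * g (x - y) = f x * f y * g x * g (-y)) :
    ∃ P l m r : X → ℝ,
      (∀ x y : X, P (x + y) + P (x - y) = 2 * (P x + P y)) ∧
      (∀ x y : X, l (x + y) = l x + l y) ∧
      (∀ x y : X, m (x + y) = m x + m y) ∧
      (∀ x y : X, r (x + 2 • y) = r x) ∧
      (∀ x : X, f x = Real.exp (P x + l x + r x)) ∧
      (∀ x : X, g x = Real.exp (P x + m x - r x)) := by
  set F : X → ℝ := fun x => Real.log (f x) with hFdef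
  set G : X → ℝ := fun x => Real.log (g x) with hGdef
  have hFG : ∀ x y : X, F (x + y) + G (x - y) = F x + F y + G x + G (-y) := by
    intro x y
    have h := congrArg Real.log (hKB x y)
    rw [Real.log_mul (hf _).ne' (hg _).ne',
        Real.log_mul (mul_pos (mul_pos (hf _) (hf _)) (hg _)).ne' (hg _).ne',
        Real.log_mul (mul_pos (hf _) (hf _)).ne' (hg _).ne',
        Real.log_mul (hf _).ne' (hf _).ne'] at h
    simpa [hFdef, hGdef] using h
  refine ⟨fun x => (F x + F (-x) + G x + G (-x)) / 4,
          fun x => (F x - F (-x)) / 2,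
          fun x => (G x - G (-x)) / 2,
          fun x => (F x + F (-x) - G x - G (-x)) / 4,
          ?_, ?_, ?_, ?_, ?_, ?_⟩
  · intro x y
    have h1 := hFG x y
    have h2 := hFG (-x) (-y)
    have h3 := hFG x (-y)
    have h4 := hFG (-x) y
    have e1 : -x + -y = -(x + y) := by abel
    have e2 : -x - -y = -(x - y) := by abel
    have e3 : x + -y = x - y := by abel
    have e4 : x - -y = x + y := by abel
    have e5 : -x + y = -(x - y) := by abel
    have e6 : -x - y = -(x + y) := by abel
    rw [e1, e2] at h2
    rw [e3, e4] at h3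
    rw [e5, e6] at h4
    simp only [neg_neg] at h1 h2 h3 h4
    ring_nf
    linarith
  · intro x y
    have h1 := hFG y x
    have h2 := hFG (-x) (-y)
    have e1 : y + x = x + y := by abel
    have e2 : y - x = -(x - y) := by abel
    have e3 : -x + -y = -(x + y) := by abel
    have e4 : -x - -y = -(x - y) := by abel
    rw [e1, e2] at h1
    rw [e3, e4] at h2
    simp only [neg_neg] at h1 h2
    ring_nf
    linarith
  · intro x y
    have h1 := hFG x (-y)
    have h2 := hFG (-y) x
    have e1 : x + -y = x - y := by abel
    have e2 : x - -y = x + y := by abel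
    have e3 : -y + x = x - y := by abel
    have e4 : -y - x = -(x + y) := by abel
    rw [e1, e2] at h1
    rw [e3, e4] at h2
    simp only [neg_neg] at h1 h2
    ring_nf
    linarith
  · intro x y
    rw [two_nsmul]
    have h1 := hFG (x + y) y
    have h2 := hFG (-(x + y)) (-y)
    have h3 := hFG (x + y) (-y)
    have h4 := hFG (-(x + y)) y
    have e1 : x + y + y = x + (y + y) := by abel
    have e2 : -(x + y) + -y = -(x + (y + y)) := by abel
    have e3 : -(x + y) - -y = -x := by abel
    have e4 : x + y + -y = x := by abel
    have e5 : x + y - -y = x + (y + y) := by abel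
    have e6 : -(x + y) + y = -x := by abel
    have e7 : -(x + y) - y = -(x + (y + y)) := by abel
    have e8 : x + y - y = x := by abel
    rw [e1, e8] at h1
    rw [e2, e3] at h2
    rw [e4, e5] at h3
    rw [e6, e7] at h4
    simp only [neg_neg] at h1 h2 h3 h4
    ring_nf
    linarith
  · intro x
    have : (F x + F (-x) + G x + G (-x)) / 4 + (F x - F (-x)) / 2 +
        (F x + F (-x) - G x - G (-x)) / 4 = F x := by ring
    rw [this, hFdef]
    exact (Real.exp_log (hf x)).symm
  · intro x
    have : (F x + F (-x) + G x + G (-x)) / 4 + (G x - G (-x)) / 2 -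
        (F x + F (-x) - G x - G (-x)) / 4 = G x := by ring
    rw [this, hGdef]
    exact (Real.exp_log (hg x)).symm
end

section
/- Let X be an abelian group and let T : X → ℝ satisfy Δ_{2k} Δ_h² T(x) = 0 for all k, h, x ∈ X, where Δ_h T(x) = T(x+h) − T(x) is the finite difference operator. Then T can be represented as T(x) = P(x) + l(x) + r(x) for all x ∈ X, where P : X → ℝ is quadratic, l : X → ℝ is additive, and r : X → ℝ is constant on cosets of 2X. -/
/-- The finite difference operator `Δ_h T(x) = T(x+h) - T(x)`. -/
def fdiff {X : Type*} [AddCommGroup X] (h : X) (T : X → ℝ) : X → ℝ :=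
  fun x => T (x + h) - T x

section Aux

variable {X : Type*} [AddCommGroup X]

/-- Auxiliary "biadditive" form built from `T`. -/
noncomputable def Af (T : X → ℝ) (x y : X) : ℝ :=
  T (x + 2 • y) - T x - (T (2 • y) - T 0)

variable (T : X → ℝ)

lemma Af_zero (y : X) : Af T 0 y = 0 := by
  simp [Af]

variable (H : ∀ y x h : X, Af T (x + h + h) y + Af T x y = 2 * Af T (x + h) y)

include H

lemma Af_doub (y h : X) : Af T (h + h) y = 2 * Af T h y := by
  have h1 := H y 0 h
  have h2 := Af_zero T y
  simp only [zero_add] at h1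
  linarith

lemma Af_add (y u v : X) : Af T (u + v) y = Af T u y + Af T v y := by
  have h1 := H y (v + v) (u - v)
  have e1 : v + v + (u - v) + (u - v) = u + u := by abel
  have e2 : v + v + (u - v) = u + v := by abel
  rw [e1, e2] at h1
  have d1 := Af_doub T H y u
  have d2 := Af_doub T H y v
  linarith

lemma Af_symm (x y : X) : Af T x y = Af T y x := by
  have key : Af T (x + x) y = Af T (y + y) x := by
    simp only [Af, two_nsmul]
    have e : x + x + (y + y) = y + y + (x + x) := by abel
    rw [e]
    ring
  rw [Af_doub T H, Af_doub T H] at key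
  linarith

lemma Af_add₂ (x y z : X) : Af T x (y + z) = Af T x y + Af T x z := by
  rw [Af_symm T H, Af_add T H, Af_symm T H x y, Af_symm T H x z]

lemma Af_sub (y u v : X) : Af T (u - v) y = Af T u y - Af T v y := by
  have h1 := Af_add T H y (u - v) v
  rw [sub_add_cancel] at h1
  linarith

lemma Af_sub₂ (x u v : X) : Af T x (u - v) = Af T x u - Af T x v := by
  rw [Af_symm T H, Af_sub T H, Af_symm T H x u, Af_symm T H x v]

end Aux

theorem solution_of_delta_equation {X : Type*} [AddCommGroup X] (T : X → ℝ)
    (hT : ∀ k h x : X, fdiff (2 • k) (fdiff h (fdiff h T)) x = 0) :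
    ∃ P l r : X → ℝ,
      (∀ x y : X, P (x + y) + P (x - y) = 2 * (P x + P y)) ∧
      (∀ x y : X, l (x + y) = l x + l y) ∧
      (∀ x y : X, r (x + 2 • y) = r x) ∧
      (∀ x : X, T x = P x + l x + r x) := by
  have H : ∀ y x h : X, Af T (x + h + h) y + Af T x y = 2 * Af T (x + h) y := by
    intro y x h
    have h0 := hT y h x
    simp only [fdiff] at h0
    simp only [Af]
    have e1 : x + h + h + 2 • y = x + 2 • y + h + h := by abel
    have e2 : x + h + 2 • y = x + 2 • y + h := by abel
    rw [e1, e2]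
    linarith
  -- abbreviations for the lemmas
  have hadd := Af_add T H
  have hadd2 := Af_add₂ T H
  have hsub := Af_sub T H
  have hsub2 := Af_sub₂ T H
  have hsymm := Af_symm T H
  -- expansion of Af on doubled pairs
  have hAxy : ∀ x y : X, Af T (x + y) (x + y)
      = Af T x x + 2 * Af T x y + Af T y y := by
    intro x y
    rw [hadd, hadd2, hadd2, hsymm y x]
    ring
  -- the candidate functions
  set P : X → ℝ := fun x => Af T x x / 4 with hP
  set l : X → ℝ := fun x => (T (2 • x) - T 0 - Af T x x) / 2 with hl
  set r : X → ℝ := fun x => T x - P x - l x with hr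
  -- key: c(x+y) = c(x) + c(y) + 2 A(x,y), where c(y) = T(2y) - T 0
  have hc : ∀ x y : X, T (2 • (x + y)) - T 0
      = (T (2 • x) - T 0) + (T (2 • y) - T 0) + 2 * Af T x y := by
    intro x y
    have e : Af T (2 • x) y = T (2 • x + 2 • y) - T (2 • x) - (T (2 • y) - T 0) := rfl
    have e2 : Af T (2 • x) y = 2 * Af T x y := by
      rw [two_nsmul, Af_doub T H]
    rw [smul_add]
    rw [e2] at e
    linarith
  have hl_add : ∀ x y : X, l (x + y) = l x + l y := by
    intro x y
    simp only [hl]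
    have := hc x y
    have := hAxy x y
    linarith
  refine ⟨P, l, r, ?_, hl_add, ?_, ?_⟩
  · -- P is quadratic
    intro x y
    simp only [hP]
    have h1 := hAxy x y
    have h2 : Af T (x - y) (x - y) = Af T x x - 2 * Af T x y + Af T y y := by
      rw [hsub, hsub2, hsub2, hsymm y x]
      ring
    linarith
  · -- r is constant on cosets of 2X
    intro x y
    simp only [hr, hP, hl]
    -- T (x + 2•y) = Af T x y + T x + (T (2•y) - T 0)
    have e1 : T (x + 2 • y) = Af T x y + T x + (T (2 • y) - T 0) := by
      simp only [Af]; ring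
    have e2 : Af T (x + 2 • y) (x + 2 • y)
        = Af T x x + 4 * Af T x y + 4 * Af T y y := by
      have d1 : Af T x (2 • y) = 2 * Af T x y := by
        rw [two_nsmul, hadd2]; ring
      have d2 : Af T (2 • y) (2 • y) = 4 * Af T y y := by
        rw [two_nsmul, hadd]; simp only [hadd2]; ring
      rw [hAxy x (2 • y), d1, d2]
      ring
    have e3 : T (2 • (x + 2 • y)) - T 0
        = (T (2 • x) - T 0) + (T (2 • (2 • y)) - T 0) + 2 * Af T x (2 • y) := hc x (2 • y)
    have d1 : Af T x (2 • y) = 2 * Af T x y := by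
      rw [two_nsmul, hadd2]; ring
    have e4 : T (2 • (2 • y)) - T 0
        = 2 * (T (2 • y) - T 0) + 2 * Af T y y := by
      have h5 := hc y y
      have e0 : (2 : ℕ) • (2 • y) = 2 • (y + y) := by rw [two_nsmul y]
      rw [e0]
      linarith
    rw [e1, e2]
    rw [d1] at e3
    linarith
  · -- the representation
    intro x
    simp only [hr]
    ring
end

section
/- Let X be an abelian group such that 2X = X (every element is twice some element), and let f, g : X → ℝ be positive functions satisfying the Kac–Bernstein functional equation f(x+y)·g(x−y) = f(x)·f(y)·g(x)·g(−y) for all x, y ∈ X. Then there exist a quadratic function P : X → ℝ, additive functions l, m : X → ℝ, and a real constant r such that f(x) = exp(P(x) + l(x) + r) and g(x) = exp(P(x) + m(x) − r) for all x ∈ X. -/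
theorem kb_aux {X : Type*} [AddCommGroup X]
    (h2 : ∀ x : X, ∃ y : X, 2 • y = x)
    (F G : X → ℝ)
    (hE : ∀ x y : X, F (x + y) + G (x - y) = F x + F y + G x + G (-y)) :
    ∃ (P l m : X → ℝ) (r : ℝ),
      (∀ x y : X, P (x + y) + P (x - y) = 2 * (P x + P y)) ∧
      (∀ x y : X, l (x + y) = l x + l y) ∧
      (∀ x y : X, m (x + y) = m x + m y) ∧
      (∀ x : X, F x = P x + l x + r) ∧
      (∀ x : X, G x = P x + m x - r) := by
  obtain ⟨S, hS_def⟩ : ∃ S : X → ℝ, S = fun x => F x + G x := ⟨_, rfl⟩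
  obtain ⟨D, hD_def⟩ : ∃ D : X → ℝ, D = fun x => F x - G x := ⟨_, rfl⟩
  have hS : ∀ x y : X, S (x + y) + S (x - y) = 2 * S x + S y + S (-y) := by
    intro x y
    have h1 := hE x y
    have h2' := hE x (-y)
    rw [sub_neg_eq_add, neg_neg, ← sub_eq_add_neg] at h2'
    simp only [hS_def]
    linarith
  have hD : ∀ x y : X, D (x + y) - D (x - y) = D y - D (-y) := by
    intro x y
    have h1 := hE x y
    have h2' := hE x (-y)
    rw [sub_neg_eq_add, neg_neg, ← sub_eq_add_neg] at h2'
    simp only [hD_def]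
    linarith
  have hT : ∀ u v : X, S (u + v) - S (-(u + v)) = (S u - S (-u)) + (S v - S (-v)) := by
    intro u v
    obtain ⟨x, hx⟩ := h2 (u + v)
    rw [two_smul] at hx
    have e1 : x + (u - x) = u := by abel
    have e2 : x - (u - x) = v := by
      rw [show x - (u - x) = x + x - u by abel, hx]; abel
    have e3 : -x + -(u - x) = -u := by rw [← e1]; abel
    have e4 : -x - -(u - x) = -v := by rw [← e2]; abel
    have e6 : -x + -x = -(u + v) := by rw [← hx]; abel
    have h1 := hS x (u - x)
    have h2' := hS (-x) (-(u - x))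
    have h3 := hS x x
    have h4 := hS (-x) (-x)
    rw [e1, e2] at h1
    rw [e3, e4, neg_neg] at h2'
    rw [hx, sub_self] at h3
    rw [e6, sub_self, neg_neg] at h4
    linarith
  have hDsub : ∀ u v : X, D u - D v = D (u - v) - D 0 := by
    intro u v
    obtain ⟨x, hx⟩ := h2 (u + v)
    rw [two_smul] at hx
    have e1 : x + (u - x) = u := by abel
    have e2 : x - (u - x) = v := by
      rw [show x - (u - x) = x + x - u by abel, hx]; abel
    have e3 : (u - x) + (u - x) = u - v := by
      rw [show (u - x) + (u - x) = u + u - (x + x) by abel, hx]; abel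
    have h1 := hD x (u - x)
    have h3 := hD (u - x) (u - x)
    rw [e1, e2] at h1
    rw [e3, sub_self] at h3
    linarith
  have hA : ∀ u v : X, D (u + v) - D 0 = (D u - D 0) + (D v - D 0) := by
    intro u v
    have h := hDsub (u + v) v
    rw [add_sub_cancel_right] at h
    linarith
  refine ⟨fun x => (S x + S (-x)) / 4,
          fun x => (S x - S (-x)) / 4 + (D x - D 0) / 2,
          fun x => (S x - S (-x)) / 4 - (D x - D 0) / 2,
          D 0 / 2, ?_, ?_, ?_, ?_, ?_⟩
  · intro x y
    simp only []
    have h1 := hS x y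
    have h2' := hS (-x) (-y)
    rw [show -x + -y = -(x + y) by abel, show -x - -y = -(x - y) by abel, neg_neg] at h2'
    linarith
  · intro u v
    simp only []
    have h1 := hT u v
    have h2' := hA u v
    linarith
  · intro u v
    simp only []
    have h1 := hT u v
    have h2' := hA u v
    linarith
  · intro x
    simp only [hS_def, hD_def]
    ring
  · intro x
    simp only [hS_def, hD_def]
    ring

theorem kac_bernstein_positive_two_divisible {X : Type*} [AddCommGroup X]
    (h2 : ∀ x : X, ∃ y : X, 2 • y = x)
    (f g : X → ℝ) (hf : ∀ x, 0 < f x) (hg : ∀ x, 0 < g x)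
    (hKB : ∀ x y : X, f (x + y) * g (x - y) = f x * f y * g x * g (-y)) :
    ∃ (P l m : X → ℝ) (r : ℝ),
      (∀ x y : X, P (x + y) + P (x - y) = 2 * (P x + P y)) ∧
      (∀ x y : X, l (x + y) = l x + l y) ∧
      (∀ x y : X, m (x + y) = m x + m y) ∧
      (∀ x : X, f x = Real.exp (P x + l x + r)) ∧
      (∀ x : X, g x = Real.exp (P x + m x - r)) := by
  have hE : ∀ x y : X, (fun x => Real.log (f x)) (x + y) + (fun x => Real.log (g x)) (x - y) =
      (fun x => Real.log (f x)) x + (fun x => Real.log (f x)) y +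
      (fun x => Real.log (g x)) x + (fun x => Real.log (g x)) (-y) := by
    intro x y
    dsimp only
    have h := congrArg Real.log (hKB x y)
    rw [Real.log_mul (hf _).ne' (hg _).ne',
        Real.log_mul (mul_ne_zero (mul_ne_zero (hf _).ne' (hf _).ne') (hg _).ne') (hg _).ne',
        Real.log_mul (mul_ne_zero (hf _).ne' (hf _).ne') (hg _).ne',
        Real.log_mul (hf _).ne' (hf _).ne'] at h
    linarith
  obtain ⟨P, l, m, r, hP, hl, hm, hF, hG⟩ :=
    kb_aux h2 (fun x => Real.log (f x)) (fun x => Real.log (g x)) hE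
  refine ⟨P, l, m, r, hP, hl, hm, ?_, ?_⟩
  · intro x
    have h := hF x
    rw [← h, Real.exp_log (hf x)]
  · intro x
    have h := hG x
    rw [← h, Real.exp_log (hg x)]
end

section
/- Let X be an abelian group and let f : X → ℝ be a positive function satisfying f(x+y)·f(x−y) = f(x)²·f(y)·f(−y) for all x, y ∈ X. Then there exist a quadratic function P : X → ℝ and an additive function l : X → ℝ such that f(x) = exp(P(x) + l(x)) for all x ∈ X. -/
theorem kac_bernstein_positive_single {X : Type*} [AddCommGroup X]
    (f : X → ℝ) (hf : ∀ x, 0 < f x)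
    (hKB : ∀ x y : X, f (x + y) * f (x - y) = f x ^ 2 * f y * f (-y)) :
    ∃ P l : X → ℝ,
      (∀ x y : X, P (x + y) + P (x - y) = 2 * (P x + P y)) ∧
      (∀ x y : X, l (x + y) = l x + l y) ∧
      (∀ x : X, f x = Real.exp (P x + l x)) := by
  set g : X → ℝ := fun x => Real.log (f x) with hg
  have hne : ∀ x, f x ≠ 0 := fun x => (hf x).ne'
  have hE : ∀ x y : X, g (x + y) + g (x - y) = 2 * g x + g y + g (-y) := by
    intro x y
    have h := congrArg Real.log (hKB x y)
    rw [Real.log_mul (hne _) (hne _), Real.log_mul (mul_ne_zero (pow_ne_zero _ (hne x)) (hne y)) (hne (-y)),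
      Real.log_mul (pow_ne_zero _ (hne x)) (hne y), Real.log_pow] at h
    simp only [hg] at *
    push_cast at h
    linarith
  refine ⟨fun x => (g x + g (-x)) / 2, fun x => (g x - g (-x)) / 2, ?_, ?_, ?_⟩
  · intro x y
    have h1 := hE x y
    have h2 := hE (-x) (-y)
    have e1 : -x + -y = -(x + y) := by abel
    have e2 : -x - -y = -(x - y) := by abel
    have e3 : - -y = y := by abel
    rw [e1, e2, e3] at h2
    linarith
  · intro x y
    have h1 := hE x y
    have h2 := hE (-x) (-y)
    have h3 := hE y x
    have h4 := hE (-y) (-x)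
    have e1 : -x + -y = -(x + y) := by abel
    have e2 : -x - -y = -(x - y) := by abel
    have e3 : - -y = y := by abel
    rw [e1, e2, e3] at h2
    have e4 : -y + -x = -(x + y) := by abel
    have e5 : -y - -x = -(y - x) := by abel
    have e6 : - -x = x := by abel
    rw [e4, e5, e6] at h4
    have e7 : y + x = x + y := by abel
    have e8 : y - x = -(x - y) := by abel
    rw [e7, e8] at h3
    linarith
  · intro x
    have : (g x + g (-x)) / 2 + (g x - g (-x)) / 2 = g x := by ring
    rw [this, hg, Real.exp_log (hf x)]
end

section
/- Let X be an abelian group, let P : X → ℝ be quadratic, let l, m : X → ℝ be additive, and let r : X → ℝ be constant on cosets of 2X. Then the functions f(x) = exp(P(x) + l(x) + r(x)) and g(x) = exp(P(x) + m(x) − r(x)) satisfy the Kac–Bernstein functional equation f(x+y)·g(x−y) = f(x)·f(y)·g(x)·g(−y) for all x, y ∈ X. -/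
theorem kac_bernstein_positive_converse {X : Type*} [AddCommGroup X]
    (P l m r : X → ℝ)
    (hP : ∀ x y : X, P (x + y) + P (x - y) = 2 * (P x + P y))
    (hl : ∀ x y : X, l (x + y) = l x + l y)
    (hm : ∀ x y : X, m (x + y) = m x + m y)
    (hr : ∀ x y : X, r (x + 2 • y) = r x)
    (f g : X → ℝ)
    (hf : ∀ x : X, f x = Real.exp (P x + l x + r x))
    (hg : ∀ x : X, g x = Real.exp (P x + m x - r x)) :
    ∀ x y : X, f (x + y) * g (x - y) = f x * f y * g x * g (-y) := by
  have hP0 : P 0 = 0 := by have := hP 0 0; simp at this; linarith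
  have hPneg : ∀ y, P (-y) = P y := by
    intro y; have := hP 0 y; simp [hP0] at this; linarith
  have hm0 : m 0 = 0 := by have := hm 0 0; simp at this; linarith
  have hmneg : ∀ y, m (-y) = - m y := by
    intro y; have := hm y (-y); simp [hm0] at this; linarith
  have hrneg : ∀ y, r (-y) = r y := by
    intro y; have := hr (-y) y
    rw [show (-y + 2 • y : X) = y by abel] at this; exact this.symm
  intro x y
  have h1 : r (x + y) = r (x - y) := by
    have := hr (x - y) y; rw [← this]; congr 1; abel
  rw [hf, hf, hf, hg, hg, hg, ← Real.exp_add, ← Real.exp_add, ← Real.exp_add,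
    ← Real.exp_add]
  congr 1
  have := hP x y
  have := hl x y
  have := hm x (-y)
  rw [hPneg, hmneg, hrneg]
  have : P (x + y) + P (x - y) = 2 * (P x + P y) := hP x y
  have hmx : m (x - y) = m x - m y := by
    have := hm x (-y); rw [hmneg] at this
    simpa [sub_eq_add_neg] using this
  rw [hl, hmx, h1]; linarith [hP x y]
end

section
/- Let X be an abelian group and let f, g : X → ℂ be nowhere-vanishing functions, each satisfying the Hermitian condition f(−x) = conj(f(x)). If f and g satisfy the Kac–Bernstein functional equation f(x+y)·g(x−y) = f(x)·f(y)·g(x)·g(−y) for all x, y ∈ X, then there exist unitary characters α, β : X → ℂ, functions a, b : X → ℝ taking only the values ±1 and constant on cosets of 4X (i.e. a(x + 4y) = a(x) and b(x + 4y) = b(x) for all x, y), a quadratic function P : X → ℝ, and a function r : X → ℝ constant on cosets of 2X, such that f(x) = α(x)·a(x)·exp(P(x) + r(x)) and g(x) = β(x)·b(x)·exp(P(x) − r(x)) for all x ∈ X. -/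
/-!
Write `f = exp F · e^{iθ}` and `g = exp G · e^{iφ}`. Taking logarithms of moduli and arguments
turns the Kac–Bernstein equation into its additive form
`A (x + y) + B (x - y) = A x + A y + B x + B (-y)`, for the even real pair `(F, G)` and for the
odd angle-valued pair `(θ, φ)`. For an even pair, `F + G` is quadratic and `F - G` is constant
on cosets of `2X`. For an odd pair, `2θ` is additive and `θ (x + 4y) = θ x + 4θ y`; the circle
being divisible, `2θ = 2α` for a character `α`, and `θ - α` takes values in `{0, π}` and is
constant on cosets of `4X`.
-/

open Complex

-- `Real.Angle` is not reducibly `AddCircle (2π)`, so the instance has to be transferred.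
noncomputable instance : DivisibleBy Real.Angle ℤ :=
  haveI : Fact (0 < 2 * Real.pi) := ⟨by positivity⟩
  inferInstanceAs (DivisibleBy (AddCircle (2 * Real.pi)) ℤ)

theorem AddMonoidHom.exists_nsmul_apply_eq {X A : Type*} [AddCommGroup X] [AddCommGroup A]
    [DivisibleBy A ℤ] (n : ℕ) (c : X →+ A) (hc : ∀ t, n • t = 0 → c t = 0) :
    ∃ α : X →+ A, ∀ x, n • α x = c x := by
  -- extend `c`, seen as a map on `n • X ≅ X ⧸ ker (n • ·)`, by Baer's criterion
  let m : X →+ X := nsmulAddMonoidHom n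
  obtain ⟨α, hα⟩ := (Module.Baer.of_divisible A).extension_property_addMonoidHom
    (QuotientAddGroup.kerLift m) (QuotientAddGroup.kerLift_injective m)
    (QuotientAddGroup.lift m.ker c fun t ht => hc t ht)
  refine ⟨α, fun x => ?_⟩
  rw [← map_nsmul]
  exact DFunLike.congr_fun hα (x : X ⧸ m.ker)

theorem exists_eq_addMonoidHom_add_two_torsion {X M : Type*} [AddCommGroup X] [AddCommGroup M]
    [DivisibleBy M ℤ] {A : X → M} (hA : ∀ x, A (-x) = -A x)
    (hadd : ∀ x y, 2 • A (x + y) = 2 • A x + 2 • A y) (h4 : ∀ x y, A (x + 4 • y) = A x + 4 • A y) :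
    ∃ (α : X →+ M) (a : X → M), (∀ x, 2 • a x = 0) ∧ (∀ x y, a (x + 4 • y) = a x) ∧
      ∀ x, A x = α x + a x := by
  obtain ⟨α, hα⟩ :=
    (AddMonoidHom.mk' (fun x => 2 • A x) hadd).exists_nsmul_apply_eq 2 fun t ht => by
      have hneg : -t = t := neg_eq_of_add_eq_zero_left (two_nsmul t ▸ ht)
      change 2 • A t = 0
      rw [two_nsmul]
      nth_rewrite 2 [← hneg]
      rw [hA, add_neg_cancel]
  simp only [AddMonoidHom.mk'_apply] at hα
  refine ⟨α, fun x => A x - α x, fun x => ?_, fun x y => ?_, fun x => (add_sub_cancel _ _).symm⟩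
  · rw [nsmul_sub, hα, sub_self]
  · dsimp only
    rw [map_add, map_nsmul]
    linear_combination (norm := module) h4 x y - 2 • hα y

theorem Real.Angle.coe_toCircle_of_two_nsmul_eq_zero {θ : Real.Angle} (h : 2 • θ = 0) :
    (θ.toCircle : ℂ) = θ.cos := by
  rcases two_nsmul_eq_zero_iff.1 h with rfl | rfl <;> simp

theorem Real.Angle.cos_eq_one_or_neg_one_of_two_nsmul_eq_zero {θ : Real.Angle} (h : 2 • θ = 0) :
    θ.cos = 1 ∨ θ.cos = -1 := by
  rcases two_nsmul_eq_zero_iff.1 h with rfl | rfl <;> simp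

def IsKacBernstein {X M : Type*} [AddCommGroup X] [AddCommGroup M] (A B : X → M) : Prop :=
  ∀ x y, A (x + y) + B (x - y) = A x + A y + B x + B (-y)

namespace IsKacBernstein

variable {X M : Type*} [AddCommGroup X] [AddCommGroup M] {A B : X → M}

theorem of_map_mul {R : Type*} [MonoidWithZero R] [NoZeroDivisors R] {L : R → M}
    (hL : ∀ z w, z ≠ 0 → w ≠ 0 → L (z * w) = L z + L w) {f g : X → R}
    (hf0 : ∀ x, f x ≠ 0) (hg0 : ∀ x, g x ≠ 0)
    (hKB : ∀ x y, f (x + y) * g (x - y) = f x * f y * g x * g (-y)) :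
    IsKacBernstein (L ∘ f) (L ∘ g) := by
  intro x y
  have h := congrArg L (hKB x y)
  rwa [hL _ _ (mul_ne_zero (mul_ne_zero (hf0 _) (hf0 _)) (hg0 _)) (hg0 _),
    hL _ _ (mul_ne_zero (hf0 _) (hf0 _)) (hg0 _), hL _ _ (hf0 _) (hf0 _),
    hL _ _ (hf0 _) (hg0 _)] at h

theorem symm (h : IsKacBernstein A B) : IsKacBernstein B A := by
  intro x y
  have e := h x (-y)
  rw [← sub_eq_add_neg, sub_neg_eq_add, neg_neg] at e
  linear_combination (norm := module) e

section Even

variable (h : IsKacBernstein A B) (hA : ∀ x, A (-x) = A x) (hB : ∀ x, B (-x) = B x)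
include h hA hB

theorem add_map_add_add_map_sub (x y : X) :
    (A + B) (x + y) + (A + B) (x - y) = 2 • ((A + B) x + (A + B) y) := by
  have e := h.symm x y
  rw [hA] at e
  simp only [Pi.add_apply]
  linear_combination (norm := module) h x y + e + hB y

theorem sub_map_add_eq_map_sub (x y : X) : (A - B) (x + y) = (A - B) (x - y) := by
  have e := h.symm x y
  rw [hA] at e
  simp only [Pi.sub_apply]
  linear_combination (norm := module) h x y - e + hB y

end Even

section Odd

variable (h : IsKacBernstein A B) (hB : ∀ x, B (-x) = -B x)
include h hB

theorem two_nsmul_map_add (x y : X) : 2 • A (x + y) = 2 • A x + 2 • A y := by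
  have e := h y x
  rw [add_comm y, ← neg_sub, hB, hB] at e
  linear_combination (norm := module) h x y + e + hB y

theorem map_add_two_nsmul_add_map_sub_two_nsmul (hA : ∀ x, A (-x) = -A x) (x y : X) :
    A (x + 2 • y) + A (x - 2 • y) = 2 • A x := by
  have e₁ := h (x + y) y
  have e₂ := h (x - y) (-y)
  have e₃ := h x (-y)
  rw [add_sub_cancel_right, add_assoc, ← two_nsmul] at e₁
  rw [sub_neg_eq_add, sub_add_cancel, ← sub_eq_add_neg, sub_sub, ← two_nsmul] at e₂
  rw [← sub_eq_add_neg, sub_neg_eq_add] at e₃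
  simp only [hA, hB, neg_neg] at e₁ e₂ e₃
  linear_combination (norm := module) e₁ + e₂ + h x y + e₃ + hB y

theorem map_add_four_nsmul (hA : ∀ x, A (-x) = -A x) (x y : X) :
    A (x + 4 • y) = A x + 4 • A y := by
  have e := h.map_add_two_nsmul_add_map_sub_two_nsmul hB hA (x + 2 • y) y
  rw [add_sub_cancel_right, add_assoc, ← add_nsmul, h.two_nsmul_map_add hB,
    two_nsmul y, h.two_nsmul_map_add hB] at e
  linear_combination (norm := module) e

end Odd

theorem exists_quadratic_add_of_even {A B : X → ℝ} (h : IsKacBernstein A B)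
    (hA : ∀ x, A (-x) = A x) (hB : ∀ x, B (-x) = B x) :
    ∃ P r : X → ℝ, (∀ x y, P (x + y) + P (x - y) = 2 * (P x + P y)) ∧
      (∀ x y, r (x + 2 • y) = r x) ∧ (∀ x, A x = P x + r x) ∧ ∀ x, B x = P x - r x := by
  refine ⟨fun x => (A x + B x) / 2, fun x => (A x - B x) / 2, fun x y => ?_, fun x y => ?_,
    fun x => by ring, fun x => by ring⟩
  · have e := h.add_map_add_add_map_sub hA hB x y
    simp only [Pi.add_apply, nsmul_eq_mul, Nat.cast_ofNat] at e
    linarith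
  · have e := h.sub_map_add_eq_map_sub hA hB (x + y) y
    rw [add_sub_cancel_right, add_assoc, ← two_nsmul] at e
    simp only [Pi.sub_apply] at e
    dsimp only
    rw [e]

theorem exists_character_mul_sign {θ φ : X → Real.Angle} (h : IsKacBernstein θ φ)
    (hθ : ∀ x, θ (-x) = -θ x) (hφ : ∀ x, φ (-x) = -φ x) :
    ∃ (χ : X → ℂ) (s : X → ℝ), (∀ x y, χ (x + y) = χ x * χ y) ∧ (∀ x, ‖χ x‖ = 1) ∧
      (∀ x, s x = 1 ∨ s x = -1) ∧ (∀ x y, s (x + 4 • y) = s x) ∧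
      ∀ x, ((θ x).toCircle : ℂ) = χ x * s x := by
  obtain ⟨α, a, ha2, ha4, hθα⟩ := exists_eq_addMonoidHom_add_two_torsion hθ
    (h.two_nsmul_map_add hφ) (h.map_add_four_nsmul hφ hθ)
  refine ⟨fun x => (α x).toCircle, fun x => (a x).cos, fun x y => ?_, fun x => Circle.norm_coe _,
    fun x => Real.Angle.cos_eq_one_or_neg_one_of_two_nsmul_eq_zero (ha2 x),
    fun x y => by simp only [ha4], fun x => ?_⟩
  · simp only [map_add, Real.Angle.toCircle_add, Circle.coe_mul]
  · rw [hθα, Real.Angle.toCircle_add, Circle.coe_mul,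
      Real.Angle.coe_toCircle_of_two_nsmul_eq_zero (ha2 x)]

end IsKacBernstein

theorem Complex.toCircle_arg_mul_exp_log_norm {z : ℂ} (hz : z ≠ 0) :
    ((arg z : Real.Angle).toCircle : ℂ) * exp (Real.log ‖z‖ : ℝ) = z := by
  rw [← ofReal_exp, Real.exp_log (norm_pos_iff.2 hz), Real.Angle.toCircle_coe, Circle.coe_exp,
    mul_comm, norm_mul_exp_arg_mul_I]

theorem kac_bernstein_hermitian {X : Type*} [AddCommGroup X] (f g : X → ℂ)
    (hf0 : ∀ x, f x ≠ 0) (hg0 : ∀ x, g x ≠ 0)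
    (hfH : ∀ x : X, f (-x) = starRingEnd ℂ (f x))
    (hgH : ∀ x : X, g (-x) = starRingEnd ℂ (g x))
    (hKB : ∀ x y : X, f (x + y) * g (x - y) = f x * f y * g x * g (-y)) :
    ∃ (α β : X → ℂ) (a b : X → ℝ) (P r : X → ℝ),
      (∀ x y : X, α (x + y) = α x * α y) ∧ (∀ x : X, ‖α x‖ = 1) ∧
      (∀ x y : X, β (x + y) = β x * β y) ∧ (∀ x : X, ‖β x‖ = 1) ∧
      (∀ x : X, a x = 1 ∨ a x = -1) ∧ (∀ x y : X, a (x + 4 • y) = a x) ∧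
      (∀ x : X, b x = 1 ∨ b x = -1) ∧ (∀ x y : X, b (x + 4 • y) = b x) ∧
      (∀ x y : X, P (x + y) + P (x - y) = 2 * (P x + P y)) ∧
      (∀ x y : X, r (x + 2 • y) = r x) ∧
      (∀ x : X, f x = α x * (a x : ℂ) * Complex.exp ((P x + r x : ℝ) : ℂ)) ∧
      (∀ x : X, g x = β x * (b x : ℂ) * Complex.exp ((P x - r x : ℝ) : ℂ)) := by
  have hmod : IsKacBernstein (fun x => Real.log ‖f x‖) (fun x => Real.log ‖g x‖) :=
    .of_map_mul (L := fun z => Real.log ‖z‖) (fun z w hz hw => by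
      rw [norm_mul, Real.log_mul (norm_ne_zero_iff.2 hz) (norm_ne_zero_iff.2 hw)]) hf0 hg0 hKB
  have harg : IsKacBernstein (fun x => (arg (f x) : Real.Angle)) (fun x => arg (g x)) :=
    .of_map_mul (L := fun z => (arg z : Real.Angle)) (fun _ _ => arg_mul_coe_angle) hf0 hg0 hKB
  obtain ⟨P, r, hP, hr, hfPr, hgPr⟩ := hmod.exists_quadratic_add_of_even
    (fun x => by simp only [hfH, norm_conj]) (fun x => by simp only [hgH, norm_conj])
  have hfodd : ∀ x, (arg (f (-x)) : Real.Angle) = -arg (f x) := by simp [hfH, arg_conj_coe_angle]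
  have hgodd : ∀ x, (arg (g (-x)) : Real.Angle) = -arg (g x) := by simp [hgH, arg_conj_coe_angle]
  obtain ⟨α, a, hα, hα1, ha, ha4, hfα⟩ := harg.exists_character_mul_sign hfodd hgodd
  obtain ⟨β, b, hβ, hβ1, hb, hb4, hgβ⟩ := harg.symm.exists_character_mul_sign hgodd hfodd
  refine ⟨α, β, a, b, P, r, hα, hα1, hβ, hβ1, ha, ha4, hb, hb4, hP, hr, fun x => ?_, fun x => ?_⟩
  · rw [← hfPr x, ← hfα, toCircle_arg_mul_exp_log_norm (hf0 x)]
  · rw [← hgPr x, ← hgβ, toCircle_arg_mul_exp_log_norm (hg0 x)]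
end

section
/- Let X be an abelian group and let f : X → ℂ be a nowhere-vanishing function satisfying the Hermitian condition f(−x) = conj(f(x)) and the equation f(x+y)·f(x−y) = f(x)²·f(y)·f(−y) for all x, y ∈ X. Then there exist a unitary character α : X → ℂ, a function a : X → ℝ taking only the values ±1 and constant on cosets of 2X, and a quadratic function P : X → ℝ, such that f(x) = α(x)·a(x)·exp(P(x)) for all x ∈ X. -/
/-! Taking moduli, `f(x+y) f(x-y) = f(x)² |f(y)|²` shows that `log |f|` is quadratic. The phase
`u = f / |f|` satisfies `u(x+y) u(x-y) = u(x)²` and `u(-x) = u(x)⁻¹`, so `u²` is a character of `X`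
that is trivial on the `2`-torsion. Hence `u(g)²` depends only on `2g`, which defines a character
of `2X`; as the circle group is divisible, it extends to a character `α` of `X` with `α² = u²`.
So `u = ±α`, and the sign is constant on cosets of `2X` since `u(x+2y) = u(x) u(y)²` while
`α(x+2y) = α(x) u(y)²`. -/

open Complex ComplexConjugate

noncomputable instance : DivisibleBy (Additive Circle) ℤ :=
  Function.Surjective.divisibleBy Circle.expHom Circle.exp_surjective fun _ _ => map_zsmul _ _ _

theorem AddMonoidHom.exists_nsmul_eq_of_nsmul_eq_zero {X M : Type*} [AddCommGroup X]
    [AddCommGroup M] [DivisibleBy M ℤ] (n : ℕ) (χ : X →+ M)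
    (hχ : ∀ t, n • t = 0 → χ t = 0) : ∃ α : X →+ M, ∀ x, n • α x = χ x := by
  set D := nsmulAddMonoidHom (α := X) n
  let β : D.range →+ M :=
    (QuotientAddGroup.lift D.ker χ hχ).comp (QuotientAddGroup.quotientKerEquivRange D).symm
  obtain ⟨α, hα⟩ := (Module.Baer.of_divisible M).extension_property_addMonoidHom
    D.range.subtype Subtype.val_injective β
  refine ⟨α, fun x => ?_⟩
  have hmk : (QuotientAddGroup.quotientKerEquivRange D).symm ⟨D x, x, rfl⟩ = (x : X ⧸ D.ker) :=
    (AddEquiv.symm_apply_eq _).2 rfl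
  calc n • α x = α (D x) := (map_nsmul α n x).symm
    _ = β ⟨D x, x, rfl⟩ := DFunLike.congr_fun hα ⟨D x, x, rfl⟩
    _ = χ x := by simp only [β, AddMonoidHom.comp_apply, AddMonoidHom.coe_coe, hmk]; rfl

section PhaseEquation

variable {X G : Type*} [AddCommGroup X] [CommGroup G] {u : X → G}

theorem sq_map_add_of_map_add_mul_map_sub (hneg : ∀ x, u (-x) = (u x)⁻¹)
    (hE : ∀ x y, u (x + y) * u (x - y) = u x ^ 2) (x y : X) :
    u (x + y) ^ 2 = u x ^ 2 * u y ^ 2 := by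
  have hyx : u (y - x) = (u (x - y))⁻¹ := by rw [← neg_sub, hneg]
  calc u (x + y) ^ 2 = (u (x + y) * u (x - y)) * (u (y + x) * u (y - x)) := by
        rw [hyx, add_comm y x, mul_mul_mul_comm, mul_inv_cancel, mul_one, sq]
    _ = u x ^ 2 * u y ^ 2 := by rw [hE, hE]

theorem map_add_two_nsmul_of_map_add_mul_map_sub (hneg : ∀ x, u (-x) = (u x)⁻¹)
    (hE : ∀ x y, u (x + y) * u (x - y) = u x ^ 2) (x y : X) :
    u (x + 2 • y) = u x * u y ^ 2 := by
  have h := hE (x + y) y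
  rw [add_sub_cancel_right, sq_map_add_of_map_add_mul_map_sub hneg hE, add_assoc, ← two_nsmul] at h
  apply mul_right_cancel (b := u x)
  rw [h, mul_right_comm, sq]

theorem sq_eq_one_of_two_nsmul_eq_zero (hneg : ∀ x, u (-x) = (u x)⁻¹) {t : X}
    (ht : 2 • t = 0) : u t ^ 2 = 1 := by
  have : u t = (u t)⁻¹ := by rw [← hneg, neg_eq_of_add_eq_zero_left (by rwa [← two_nsmul])]
  calc u t ^ 2 = u t * (u t)⁻¹ := by rw [sq, ← this]
    _ = 1 := mul_inv_cancel _

theorem exists_addChar_sq_eq_of_map_add_mul_map_sub [DivisibleBy (Additive G) ℤ]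
    (hneg : ∀ x, u (-x) = (u x)⁻¹) (hE : ∀ x y, u (x + y) * u (x - y) = u x ^ 2) :
    ∃ α : AddChar X G, ∀ x, α x ^ 2 = u x ^ 2 := by
  let χ : X →+ Additive G :=
    { toFun := fun x => Additive.ofMul (u x ^ 2)
      map_zero' := congrArg Additive.ofMul (sq_eq_one_of_two_nsmul_eq_zero hneg (smul_zero 2))
      map_add' := fun x y =>
        congrArg Additive.ofMul (sq_map_add_of_map_add_mul_map_sub hneg hE x y) }
  obtain ⟨α, hα⟩ := χ.exists_nsmul_eq_of_nsmul_eq_zero 2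
    fun t ht => congrArg Additive.ofMul (sq_eq_one_of_two_nsmul_eq_zero hneg ht)
  exact ⟨AddChar.toAddMonoidHomEquiv.symm α, fun x => congrArg Additive.toMul (hα x)⟩

end PhaseEquation

theorem Circle.coe_exp_arg_mul_norm (z : ℂ) : (Circle.exp (arg z) : ℂ) * ‖z‖ = z := by
  rw [Circle.coe_exp, mul_comm, norm_mul_exp_arg_mul_I]

theorem Circle.coe_exp_arg {z : ℂ} (hz : z ≠ 0) : (Circle.exp (arg z) : ℂ) = z / ‖z‖ :=
  eq_div_of_mul_eq (ofReal_ne_zero.2 (norm_ne_zero_iff.2 hz)) (coe_exp_arg_mul_norm z)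

theorem Circle.eq_or_eq_neg_of_sq_eq_sq {z w : Circle} (h : z ^ 2 = w ^ 2) : z = w ∨ z = -w := by
  simpa only [← Circle.coe_inj, Circle.coe_neg, Circle.coe_pow, sq_eq_sq_iff_eq_or_eq_neg]
    using h

theorem Circle.exp_arg_conj {z : ℂ} (hz : z ≠ 0) :
    Circle.exp (arg (conj z)) = (Circle.exp (arg z))⁻¹ := by
  ext
  rw [Circle.coe_inv_eq_conj, Circle.coe_exp_arg hz, Circle.coe_exp_arg ((map_ne_zero _).2 hz),
    map_div₀, conj_ofReal, norm_conj]

section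

variable {X : Type*} [AddCommGroup X] {f : X → ℂ}

theorem norm_add_mul_norm_sub (hf : ∀ x y, f (x + y) * f (x - y) = f x ^ 2 * ‖f y‖ ^ 2)
    (x y : X) : ‖f (x + y)‖ * ‖f (x - y)‖ = ‖f x‖ ^ 2 * ‖f y‖ ^ 2 := by
  simpa using congrArg norm (hf x y)

theorem log_norm_add_add_log_norm_sub (hf0 : ∀ x, f x ≠ 0)
    (hf : ∀ x y, f (x + y) * f (x - y) = f x ^ 2 * ‖f y‖ ^ 2) (x y : X) :
    Real.log ‖f (x + y)‖ + Real.log ‖f (x - y)‖ = 2 * (Real.log ‖f x‖ + Real.log ‖f y‖) := by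
  have hpos : ∀ x, ‖f x‖ ≠ 0 := fun x => norm_ne_zero_iff.2 (hf0 x)
  have h := congrArg Real.log (norm_add_mul_norm_sub hf x y)
  rw [Real.log_mul (hpos _) (hpos _),
    Real.log_mul (pow_ne_zero _ (hpos _)) (pow_ne_zero _ (hpos _)), Real.log_pow, Real.log_pow] at h
  push_cast at h
  linarith

theorem exp_arg_add_mul_exp_arg_sub (hf0 : ∀ x, f x ≠ 0)
    (hf : ∀ x y, f (x + y) * f (x - y) = f x ^ 2 * ‖f y‖ ^ 2) (x y : X) :
    Circle.exp (arg (f (x + y))) * Circle.exp (arg (f (x - y))) = Circle.exp (arg (f x)) ^ 2 := by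
  have hy : (‖f y‖ : ℂ) ≠ 0 := ofReal_ne_zero.2 (norm_ne_zero_iff.2 (hf0 y))
  ext
  rw [Circle.coe_mul, Circle.coe_pow, Circle.coe_exp_arg (hf0 _), Circle.coe_exp_arg (hf0 _),
    Circle.coe_exp_arg (hf0 _), div_mul_div_comm, hf, ← ofReal_mul, norm_add_mul_norm_sub hf,
    div_pow]
  push_cast
  field_simp

end

theorem kac_bernstein_hermitian_single {X : Type*} [AddCommGroup X] (f : X → ℂ)
    (hf0 : ∀ x, f x ≠ 0)
    (hfH : ∀ x : X, f (-x) = starRingEnd ℂ (f x))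
    (hKB : ∀ x y : X, f (x + y) * f (x - y) = f x ^ 2 * f y * f (-y)) :
    ∃ (α : X → ℂ) (a : X → ℝ) (P : X → ℝ),
      (∀ x y : X, α (x + y) = α x * α y) ∧ (∀ x : X, ‖α x‖ = 1) ∧
      (∀ x : X, a x = 1 ∨ a x = -1) ∧ (∀ x y : X, a (x + 2 • y) = a x) ∧
      (∀ x y : X, P (x + y) + P (x - y) = 2 * (P x + P y)) ∧
      (∀ x : X, f x = α x * (a x : ℂ) * Complex.exp ((P x : ℝ) : ℂ)) := by
  classical
  have hf : ∀ x y, f (x + y) * f (x - y) = f x ^ 2 * ‖f y‖ ^ 2 := fun x y => by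
    rw [hKB, mul_assoc, hfH, mul_conj']
  set u : X → Circle := fun x => Circle.exp (arg (f x))
  have hneg : ∀ x, u (-x) = (u x)⁻¹ := fun x => by simp only [u, hfH, Circle.exp_arg_conj (hf0 x)]
  have hE := exp_arg_add_mul_exp_arg_sub hf0 hf
  obtain ⟨α, hα⟩ := exists_addChar_sq_eq_of_map_add_mul_map_sub hneg hE
  refine ⟨fun x => α x, fun x => if u x = α x then 1 else -1, fun x => Real.log ‖f x‖,
    fun x y => by simp only [AddChar.map_add_eq_mul, Circle.coe_mul], fun x => Circle.norm_coe _,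
    fun x => by dsimp only; split_ifs <;> simp, fun x y => ?_,
    log_norm_add_add_log_norm_sub hf0 hf, fun x => ?_⟩
  · simp only [map_add_two_nsmul_of_map_add_mul_map_sub hneg hE, AddChar.map_add_eq_mul,
      AddChar.map_nsmul_eq_pow, hα, mul_left_inj]
  · dsimp only
    rw [← ofReal_exp, Real.exp_log (norm_pos_iff.2 (hf0 x))]
    conv_lhs => rw [← Circle.coe_exp_arg_mul_norm (f x)]
    rcases Circle.eq_or_eq_neg_of_sq_eq_sq (hα x).symm with h | h
    · simp [u, h]
    · simp [u, h, Circle.neg_ne_self]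
end

section
/- Let X be an abelian group, let α, β : X → ℂ be unitary characters, let P : X → ℝ be quadratic, let r : X → ℝ be constant on cosets of 2X, and let a, b : X → ℝ take only the values ±1, be constant on cosets of 2X, and satisfy a(x)·b(x) = 1 for all x ∈ X. Then the functions f(x) = α(x)·a(x)·exp(P(x) + r(x)) and g(x) = β(x)·b(x)·exp(P(x) − r(x)) satisfy the Kac–Bernstein functional equation f(x+y)·g(x−y) = f(x)·f(y)·g(x)·g(−y) for all x, y ∈ X. -/
/-!
The Kac–Bernstein equation is multiplicative in the pair `(f, g)`, so it suffices to check it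
for the three factors separately. For the characters it is the homomorphism property. Functions
constant on cosets of `2X` are even and take the same value at `x + y` and `x - y`; this settles
the sign factors (using `a b = 1`) and the `± r` part of the exponent, while the quadratic part
of the exponent is exactly the parallelogram law.
-/

def IsKacBernsteinSolution {X M : Type*} [AddCommGroup X] [CommMonoid M] (f g : X → M) : Prop :=
  ∀ x y : X, f (x + y) * g (x - y) = f x * f y * g x * g (-y)

section CosetsOfTwo

variable {X Y : Type*} [AddCommGroup X] {s : X → Y}

theorem map_neg_of_map_add_two_nsmul (hs : ∀ x y : X, s (x + 2 • y) = s x) (x : X) :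
    s (-x) = s x := by
  simpa [two_nsmul] using hs x (-x)

theorem map_add_eq_map_sub_of_map_add_two_nsmul (hs : ∀ x y : X, s (x + 2 • y) = s x)
    (x y : X) : s (x + y) = s (x - y) := by
  rw [← hs (x - y) y]
  congr 1
  abel

end CosetsOfTwo

theorem map_neg_of_parallelogram {X : Type*} [AddCommGroup X] {P : X → ℝ}
    (hP : ∀ x y : X, P (x + y) + P (x - y) = 2 * (P x + P y)) (x : X) : P (-x) = P x := by
  have h0 := hP 0 0
  have hx := hP 0 x
  simp only [add_zero, sub_zero, zero_add, zero_sub] at h0 hx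
  linarith

namespace IsKacBernsteinSolution

variable {X M : Type*} [AddCommGroup X] [CommMonoid M]

theorem mul {f₁ g₁ f₂ g₂ : X → M} (h₁ : IsKacBernsteinSolution f₁ g₁)
    (h₂ : IsKacBernsteinSolution f₂ g₂) : IsKacBernsteinSolution (f₁ * f₂) (g₁ * g₂) := by
  intro x y
  simp only [Pi.mul_apply]
  calc f₁ (x + y) * f₂ (x + y) * (g₁ (x - y) * g₂ (x - y))
      = (f₁ (x + y) * g₁ (x - y)) * (f₂ (x + y) * g₂ (x - y)) := by ac_rfl
    _ = f₁ x * f₂ x * (f₁ y * f₂ y) * (g₁ x * g₂ x) * (g₁ (-y) * g₂ (-y)) := by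
      rw [h₁, h₂]; ac_rfl

theorem of_map_add {α β : X → M} (hα : ∀ x y : X, α (x + y) = α x * α y)
    (hβ : ∀ x y : X, β (x + y) = β x * β y) : IsKacBernsteinSolution α β := by
  intro x y
  rw [hα, sub_eq_add_neg, hβ, mul_assoc (α x * α y)]

theorem of_mul_eq_one {a b : X → M} (hb : ∀ x y : X, b (x + 2 • y) = b x)
    (hab : ∀ x : X, a x * b x = 1) : IsKacBernsteinSolution a b := by
  intro x y
  rw [← map_add_eq_map_sub_of_map_add_two_nsmul hb, hab, map_neg_of_map_add_two_nsmul hb,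
    mul_right_comm _ _ (b x), hab, one_mul, hab]

theorem exp_quadratic_add {P r : X → ℝ}
    (hP : ∀ x y : X, P (x + y) + P (x - y) = 2 * (P x + P y))
    (hr : ∀ x y : X, r (x + 2 • y) = r x) :
    IsKacBernsteinSolution (fun x ↦ Complex.exp ((P x + r x : ℝ) : ℂ))
      (fun x ↦ Complex.exp ((P x - r x : ℝ) : ℂ)) := by
  intro x y
  have hexponent : P (x + y) + r (x + y) + (P (x - y) - r (x - y)) =
      P x + r x + (P y + r y) + (P x - r x) + (P (-y) - r (-y)) := by
    rw [map_neg_of_parallelogram hP, map_neg_of_map_add_two_nsmul hr,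
      map_add_eq_map_sub_of_map_add_two_nsmul hr]
    linarith [hP x y]
  simp only [← Complex.exp_add, ← Complex.ofReal_add, hexponent]

end IsKacBernsteinSolution

theorem kac_bernstein_hermitian_converse_general {X : Type*} [AddCommGroup X]
    (α β : X → ℂ)
    (hα : ∀ x y : X, α (x + y) = α x * α y)
    (hβ : ∀ x y : X, β (x + y) = β x * β y)
    (P : X → ℝ) (hP : ∀ x y : X, P (x + y) + P (x - y) = 2 * (P x + P y))
    (r : X → ℝ) (hr : ∀ x y : X, r (x + 2 • y) = r x)
    (a b : X → ℝ)
    (hb2 : ∀ x y : X, b (x + 2 • y) = b x)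
    (hab : ∀ x : X, a x * b x = 1)
    (f g : X → ℂ)
    (hf : ∀ x : X, f x = α x * (a x : ℂ) * Complex.exp ((P x + r x : ℝ) : ℂ))
    (hg : ∀ x : X, g x = β x * (b x : ℂ) * Complex.exp ((P x - r x : ℝ) : ℂ)) :
    ∀ x y : X, f (x + y) * g (x - y) = f x * f y * g x * g (-y) := by
  have hsigns : IsKacBernsteinSolution (fun x ↦ (a x : ℂ)) (fun x ↦ (b x : ℂ)) :=
    .of_mul_eq_one (fun x y ↦ by rw [hb2]) (fun x ↦ by exact_mod_cast hab x)
  have hfg := ((IsKacBernsteinSolution.of_map_add hα hβ).mul hsigns).mul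
    (IsKacBernsteinSolution.exp_quadratic_add hP hr)
  rwa [show f = _ from funext hf, show g = _ from funext hg]

theorem kac_bernstein_hermitian_converse {X : Type*} [AddCommGroup X]
    (α β : X → ℂ)
    (hα : ∀ x y : X, α (x + y) = α x * α y) (hα1 : ∀ x : X, ‖α x‖ = 1)
    (hβ : ∀ x y : X, β (x + y) = β x * β y) (hβ1 : ∀ x : X, ‖β x‖ = 1)
    (P : X → ℝ) (hP : ∀ x y : X, P (x + y) + P (x - y) = 2 * (P x + P y))
    (r : X → ℝ) (hr : ∀ x y : X, r (x + 2 • y) = r x)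
    (a b : X → ℝ)
    (ha : ∀ x : X, a x = 1 ∨ a x = -1) (hb : ∀ x : X, b x = 1 ∨ b x = -1)
    (ha2 : ∀ x y : X, a (x + 2 • y) = a x) (hb2 : ∀ x y : X, b (x + 2 • y) = b x)
    (hab : ∀ x : X, a x * b x = 1)
    (f g : X → ℂ)
    (hf : ∀ x : X, f x = α x * (a x : ℂ) * Complex.exp ((P x + r x : ℝ) : ℂ))
    (hg : ∀ x : X, g x = β x * (b x : ℂ) * Complex.exp ((P x - r x : ℝ) : ℂ)) :
    ∀ x y : X, f (x + y) * g (x - y) = f x * f y * g x * g (-y) :=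
  kac_bernstein_hermitian_converse_general α β hα hβ P hP r hr a b hb2 hab f g hf hg
end

section
/- Let X be an abelian group and let T, S, A, B : X → ℝ be functions satisfying T(x+y) + S(x−y) = A(x) + B(y) for all x, y ∈ X. Then Δ_h² Δ_{2k} T(x) = 0 for all x, h, k ∈ X, where Δ_h T(x) = T(x+h) − T(x). -/
theorem pexider_implies_delta_equation {X : Type*} [AddCommGroup X]
    (T S A B : X → ℝ)
    (hTS : ∀ x y : X, T (x + y) + S (x - y) = A x + B y) :
    ∀ x h k : X, fdiff h (fdiff h (fdiff (2 • k) T)) x = 0 := by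
  intro x h k
  simp only [fdiff, two_smul]
  have h1 := hTS (x + k) k
  have h2 := hTS x 0
  have h3 := hTS (x + k) (h + k)
  have h4 := hTS x h
  have h5 := hTS (x + h + k) k
  have h6 := hTS (x + h) 0
  have h7 := hTS (x + h + k) (h + k)
  have h8 := hTS (x + h) h
  abel_nf at h1 h2 h3 h4 h5 h6 h7 h8 ⊢
  simp only [zsmul_eq_mul, nsmul_eq_mul] at h1 h2 h3 h4 h5 h6 h7 h8 ⊢
  linear_combination h7 - h8 - h5 + h6 - h3 + h4 + h1 - h2
end

section
/- Let X be an abelian group and let T : X → ℝ be an even function (T(−x) = T(x) for all x) with T(0) = 0 satisfying Δ_{2k} Δ_h² T(x) = 0 for all k, h, x ∈ X, where Δ_h T(x) = T(x+h) − T(x). Then T can be represented as T(x) = P(x) + r(x), where P : X → ℝ is quadratic and r : X → ℝ is constant on cosets of 2X. -/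
theorem even_solution_of_delta_equation {X : Type*} [AddCommGroup X] (T : X → ℝ)
    (hTeven : ∀ x : X, T (-x) = T x) (hT0 : T 0 = 0)
    (hT : ∀ k h x : X, fdiff (2 • k) (fdiff h (fdiff h T)) x = 0) :
    ∃ P r : X → ℝ,
      (∀ x y : X, P (x + y) + P (x - y) = 2 * (P x + P y)) ∧
      (∀ x y : X, r (x + 2 • y) = r x) ∧
      (∀ x : X, T x = P x + r x) := by
  -- Rewrite the hypothesis: the second difference is invariant under shifts by 2k.
  have H : ∀ k h x : X, T (x + k + k + h + h) - 2 * T (x + k + k + h) + T (x + k + k)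
      = T (x + h + h) - 2 * T (x + h) + T x := by
    intro k h x
    have := hT k h x
    simp only [fdiff, two_smul] at this
    abel_nf at this ⊢
    simp only [smul_eq_mul, zsmul_eq_mul, zero_add, add_zero] at this ⊢
    push_cast at this ⊢
    linarith
  -- Parallelogram law with an even point.
  have star : ∀ k b : X, T (k + k + b) + T (k + k - b) = 2 * T (k + k) + 2 * T b := by
    intro k b
    have h1 := H k b (-b)
    have h2 := hTeven b
    abel_nf at h1 h2 ⊢
    simp only [smul_eq_mul, zsmul_eq_mul, zero_add, add_zero] at h1 h2 ⊢
    push_cast at h1 h2 ⊢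
    linarith
  -- Additivity of g := Δ_{2k} T  (up to the constant g 0).
  have gadd : ∀ k x a b : X,
      (T (x + a + b + k + k) - T (x + a + b)) + (T (x + k + k) - T x)
        = (T (x + a + k + k) - T (x + a)) + (T (x + b + k + k) - T (x + b)) := by
    intro k x a b
    have i1 := H k (a + b) x
    have i2 := H k a (x + b + b)
    have i3 := H k b (x + a)
    have i4 := H k b x
    abel_nf at i1 i2 i3 i4 ⊢
    simp only [smul_eq_mul, zsmul_eq_mul, zero_add, add_zero] at i1 i2 i3 i4 ⊢
    push_cast at i1 i2 i3 i4 ⊢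
    linarith
  refine ⟨fun x => T (x + x) / 4, fun x => T x - T (x + x) / 4, ?_, ?_, ?_⟩
  · intro x y
    have h1 := star x (y + y)
    abel_nf at h1 ⊢
    linarith
  · intro x y
    have A1 := star y (y + y)
    have A2 := gadd y 0 x x
    have A3 := gadd y 0 (x + x) (y + y)
    simp only [two_smul]
    abel_nf at A1 A2 A3 ⊢
    simp only [smul_eq_mul, zsmul_eq_mul, zero_add, add_zero, hT0] at A1 A2 A3 ⊢
    push_cast at A1 A2 A3 ⊢
    linarith
  · intro x; ring
end

section
/- Let X be an abelian group and let T : X → ℝ be an odd function (T(−x) = −T(x) for all x) satisfying Δ_{2k} Δ_h² T(x) = 0 for all k, h, x ∈ X, where Δ_h T(x) = T(x+h) − T(x). Then T is additive, i.e. T(x+y) = T(x) + T(y) for all x, y ∈ X. -/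
theorem odd_solution_of_delta_equation {X : Type*} [AddCommGroup X] (T : X → ℝ)
    (hTodd : ∀ x : X, T (-x) = -T x)
    (hT : ∀ k h x : X, fdiff (2 • k) (fdiff h (fdiff h T)) x = 0) :
    ∀ x y : X, T (x + y) = T x + T y := by
  have hB : ∀ x h : X, T (x + h + h) = 2 * T (x + h) - T x := by
    intro x h
    have h1 := hT (x + h) h (-(x + h + h))
    simp only [fdiff, two_smul] at h1
    rw [show (-(x + h + h) + (x + h + (x + h)) + h + h : X) = x + h + h by abel,
        show (-(x + h + h) + (x + h + (x + h)) + h : X) = x + h by abel,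
        show (-(x + h + h) + (x + h + (x + h)) : X) = x by abel,
        show (-(x + h + h) + h + h : X) = -x by abel,
        show (-(x + h + h) + h : X) = -(x + h) by abel,
        hTodd x, hTodd (x + h), hTodd (x + h + h)] at h1
    linarith
  intro x y
  have h2 := hB (x - y) y
  have h3 := hB (y - x) x
  rw [show (x - y + y + y : X) = x + y by abel, show (x - y + y : X) = x by abel] at h2
  rw [show (y - x + x + x : X) = x + y by abel, show (y - x + x : X) = y by abel] at h3
  have h4 : T (y - x) = -T (x - y) := by
    rw [show (y - x : X) = -(x - y) by abel, hTodd]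
  linarith
end

section
/- Let X be an abelian group with 2X = X, and let f, g : X → ℂ satisfy the Kac–Bernstein functional equation f(x+y)·g(x−y) = f(x)·f(y)·g(x)·g(−y) for all x, y ∈ X, with each of f and g satisfying the Hermitian condition f(−x) = conj(f(x)), and with f(0) = g(0) = 1. Then |f(x)| = |g(x)| for all x ∈ X. -/
/-! Write `x = y + y`. The functional equation at `(y, y)` and at `(y, -y)` gives
`f (y + y) = f y * f y * g y * g (-y)` and `g (y + y) = f y * f (-y) * g y * g y`, and the
Hermitian condition makes `‖f‖` and `‖g‖` even, so both sides have norm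
`‖f y‖ ^ 2 * ‖g y‖ ^ 2`. -/

section KacBernstein

variable {X M : Type*} [AddGroup X] [Monoid M] {f g : X → M}

theorem kacBernstein_left_apply_add_self (hg1 : g 0 = 1)
    (hKB : ∀ x y : X, f (x + y) * g (x - y) = f x * f y * g x * g (-y)) (y : X) :
    f (y + y) = f y * f y * g y * g (-y) := by
  simpa only [sub_self, hg1, mul_one] using hKB y y

theorem kacBernstein_right_apply_add_self (hf1 : f 0 = 1)
    (hKB : ∀ x y : X, f (x + y) * g (x - y) = f x * f y * g x * g (-y)) (y : X) :
    g (y + y) = f y * f (-y) * g y * g y := by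
  simpa only [add_neg_cancel, hf1, one_mul, sub_neg_eq_add, neg_neg] using hKB y (-y)

end KacBernstein

theorem kac_bernstein_abs_eq {X : Type*} [AddCommGroup X]
    (h2 : ∀ x : X, ∃ y : X, 2 • y = x)
    (f g : X → ℂ)
    (hfH : ∀ x : X, f (-x) = starRingEnd ℂ (f x))
    (hgH : ∀ x : X, g (-x) = starRingEnd ℂ (g x))
    (hf1 : f 0 = 1) (hg1 : g 0 = 1)
    (hKB : ∀ x y : X, f (x + y) * g (x - y) = f x * f y * g x * g (-y)) :
    ∀ x : X, ‖f x‖ = ‖g x‖ := by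
  intro x
  obtain ⟨y, rfl⟩ := h2 x
  rw [two_smul, kacBernstein_left_apply_add_self hg1 hKB, kacBernstein_right_apply_add_self hf1 hKB,
    hfH, hgH]
  simp only [norm_mul, Complex.norm_conj]
end

section
/- Let X be an abelian group with 2X = X, and let f, g : X → ℂ satisfy the Kac–Bernstein functional equation f(x+y)·g(x−y) = f(x)·f(y)·g(x)·g(−y) for all x, y ∈ X, with each of f and g satisfying the Hermitian condition f(−x) = conj(f(x)), and with f(0) = g(0) = 1. Then the set G = {x ∈ X : f(x) ≠ 0} is a subgroup of X, G = {x ∈ X : g(x) ≠ 0}, and 2x ∈ G implies x ∈ G (so the quotient X/G has no elements of order 2). -/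
theorem kac_bernstein_support_subgroup {X : Type*} [AddCommGroup X]
    (h2 : ∀ x : X, ∃ y : X, 2 • y = x)
    (f g : X → ℂ)
    (hfH : ∀ x : X, f (-x) = starRingEnd ℂ (f x))
    (hgH : ∀ x : X, g (-x) = starRingEnd ℂ (g x))
    (hf1 : f 0 = 1) (hg1 : g 0 = 1)
    (hKB : ∀ x y : X, f (x + y) * g (x - y) = f x * f y * g x * g (-y)) :
    ∃ G : AddSubgroup X,
      (∀ x : X, x ∈ G ↔ f x ≠ 0) ∧
      (∀ x : X, x ∈ G ↔ g x ≠ 0) ∧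
      (∀ x : X, 2 • x ∈ G → x ∈ G) := by
  -- doubling formulas
  have hf2 : ∀ u : X, f (2 • u) = f u * f u * g u * starRingEnd ℂ (g u) := by
    intro u
    have h := hKB u u
    rw [sub_self, hg1, mul_one, hgH] at h
    rw [two_smul, h]
  have hg2 : ∀ u : X, g (2 • u) = f u * starRingEnd ℂ (f u) * g u * g u := by
    intro u
    have h := hKB u (-u)
    rw [add_neg_cancel, hf1, one_mul, sub_neg_eq_add, neg_neg, hfH] at h
    rw [two_smul, h]
  -- same support
  have hfg : ∀ x : X, f x ≠ 0 ↔ g x ≠ 0 := by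
    intro x
    obtain ⟨u, hu⟩ := h2 x
    have h1 := hf2 u
    have h2' := hg2 u
    rw [hu] at h1 h2'
    rw [h1, h2']
    simp [mul_ne_zero_iff, map_ne_zero]
  refine ⟨{ carrier := {x | f x ≠ 0},
            zero_mem' := by simp [hf1],
            add_mem' := ?_,
            neg_mem' := ?_ }, fun x => Iff.rfl, fun x => hfg x, ?_⟩
  · intro a b ha hb
    have hga : g a ≠ 0 := (hfg a).mp ha
    have hgb : g (-b) ≠ 0 := by rw [hgH]; exact (map_ne_zero _).mpr ((hfg b).mp hb)
    have h := hKB a b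
    have : f (a + b) * g (a - b) ≠ 0 := by
      rw [h]; exact mul_ne_zero (mul_ne_zero (mul_ne_zero ha hb) hga) hgb
    exact fun h0 => this (by rw [h0, zero_mul])
  · intro a ha
    show f (-a) ≠ 0
    rw [hfH]
    exact (map_ne_zero _).mpr ha
  · intro x hx
    have h := hf2 x
    have : f (2 • x) ≠ 0 := hx
    rw [h] at this
    exact fun h0 => this (by rw [h0]; ring)
end

section
/- Let X = ℤ² and define f : X → ℝ by f(m,n) = (−1)^{m·n} (equivalently f(m,n) = exp(iπ·m·n), which is real-valued). Then f satisfies the equation f(x+y)·f(x−y) = f(x)²·f(y)·f(−y) for all x, y ∈ X, f takes only the values ±1 and is constant on cosets of 2X, but f is not multiplicative: f((1,0) + (0,1)) ≠ f(1,0)·f(0,1). -/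
theorem kac_bernstein_counterexample_int2 (f : ℤ × ℤ → ℝ)
    (hf : ∀ p : ℤ × ℤ, f p = (-1 : ℝ) ^ (p.1 * p.2)) :
    (∀ x y : ℤ × ℤ, f (x + y) * f (x - y) = f x ^ 2 * f y * f (-y)) ∧
    (∀ x : ℤ × ℤ, f x = 1 ∨ f x = -1) ∧
    (∀ x y : ℤ × ℤ, f (x + 2 • y) = f x) ∧
    f ((1, 0) + (0, 1)) ≠ f (1, 0) * f (0, 1) := by
  have hm : ∀ a b : ℤ, (-1:ℝ)^a * (-1:ℝ)^b = (-1:ℝ)^(a+b) := fun a b =>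
    (zpow_add₀ (by norm_num) a b).symm
  refine ⟨?_, ?_, ?_, ?_⟩
  · intro x y
    simp only [hf, Prod.fst_add, Prod.snd_add, Prod.fst_sub, Prod.snd_sub, Prod.fst_neg,
      Prod.snd_neg, sq]
    rw [hm, hm, hm, hm]
    congr 1
    ring
  · intro x
    rcases Int.even_or_odd (x.1 * x.2) with h | h
    · left; rw [hf]; exact h.neg_one_zpow
    · right; rw [hf, Odd.neg_one_zpow h]
  · intro x y
    simp only [hf, Prod.fst_add, Prod.snd_add, Prod.smul_fst, Prod.smul_snd, smul_eq_mul]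
    have : Even ((x.1 + 2 * y.1) * (x.2 + 2 * y.2) - x.1 * x.2) := ⟨x.1*y.2 + y.1*x.2 + 2*y.1*y.2, by ring⟩
    rw [show (x.1 + 2 • y.1) * (x.2 + 2 • y.2) = (x.1*x.2) + ((x.1 + 2*y.1) * (x.2 + 2*y.2) - x.1*x.2) by push_cast; ring,
      ← hm, this.neg_one_zpow, mul_one]
  · simp [hf]
    norm_num
end
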